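/- Let k be a field of characteristic 2, V = k^{2n} with β(v,w) = vᵗSw, S = [[0,I],[I,0]], g = o(2n). For ξ ∈ g*, choose X with ξ(x) = tr(Xx) for all x ∈ g and set T_ξ = X + SXᵗS. Then T_ξ is well-defined, T_ξ ∈ o(2n) (i.e., β(T_ξ v, v) = 0 for all v), the map θ: g* → g, ξ ↦ T_ξ, is a linear bijection, and two elements ξ, ζ ∈ g* are in the same O(2n)-orbit if and only if T_ξ and T_ζ are O(2n)-conjugate. -/

import Mathlib

open Matrix

/-- The even orthogonal Lie algebra `o(2n) = {x : β(xv,v) = 0 ∀v}` as a submodule of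
matrices, where `β(v,w) = vᵀSw`. -/
def oEven {k : Type*} [Field k] {ι : Type*} [Fintype ι] [DecidableEq ι]
    (S : Matrix ι ι k) : Submodule k (Matrix ι ι k) where
  carrier := {x | ∀ v, (x.mulVec v) ⬝ᵥ (S.mulVec v) = 0}
  add_mem' := by
    intro a b ha hb v
    simp [Matrix.add_mulVec, add_dotProduct, ha v, hb v]
  zero_mem' := by intro v; simp
  smul_mem' := by
    intro c x hx v
    simp [Matrix.smul_mulVec, smul_dotProduct, hx v]

/-!
In characteristic 2, for `S` symmetric with `S * S = 1`, a matrix `x` lies in `o(2n)` exactly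
when `S * x` is alternating (symmetric with zero diagonal). Under the trace form a matrix `Y`
annihilates every alternating matrix iff `Y` is symmetric, so `X` represents the zero functional
on `o(2n)` iff `X * S` is symmetric, i.e. iff `X + S * Xᵀ * S = 0`. Every element of `o(2n)`
arises this way, since an alternating matrix is `U + Uᵀ` with `U` its strict upper triangle;
hence `ξ ↦ T_ξ` is a well-defined linear bijection. Polarizing `α(gv) = α(v)` with
`S = B + Bᵀ` gives `gᵀ * S * g = S`, so `g⁻¹ = S * gᵀ * S` and `T` is `O(2n)`-equivariant,
which turns the orbit statement into a conjugacy statement.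
-/

theorem Finset.sum_sum_eq_zero_of_add_swap_eq_zero {ι M : Type*} [Fintype ι] [AddCommMonoid M]
    {f : ι → ι → M} (hdiag : ∀ i, f i i = 0) (hswap : ∀ i j, f i j + f j i = 0) :
    ∑ i, ∑ j, f i j = 0 := by
  rw [← Finset.sum_product']
  refine Finset.sum_ninvolution Prod.swap (fun p => hswap p.1 p.2) ?_ (by simp) (by simp)
  rintro ⟨i, j⟩ hij hfix
  obtain rfl : i = j := congrArg Prod.fst hfix.symm
  exact hij (hdiag i)

theorem LinearMap.exists_linearEquiv_apply_eq_of_ker_eq {R M N P : Type*} [Ring R]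
    [AddCommGroup M] [AddCommGroup N] [AddCommGroup P] [Module R M] [Module R N] [Module R P]
    {f : M →ₗ[R] N} {g : M →ₗ[R] P} (hf : Function.Surjective f)
    (hg : Function.Surjective g) (h : ker f = ker g) : ∃ e : N ≃ₗ[R] P, ∀ m, e (f m) = g m :=
  ⟨(f.quotKerEquivOfSurjective hf).symm ≪≫ₗ Submodule.quotEquivOfEq _ _ h ≪≫ₗ
      g.quotKerEquivOfSurjective hg,
    fun m => by simp [quotKerEquivOfSurjective_symm_apply]⟩

namespace Matrix

theorem neg_eq_self_of_charTwo {m n R : Type*} [Ring R] [CharP R 2] (A : Matrix m n R) :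
    -A = A := by
  ext i j
  exact CharTwo.neg_eq (A i j)

section TracePairing

variable (n : Type*) (R : Type*) [Fintype n] [CommSemiring R]

def traceMulLeft : Matrix n n R →ₗ[R] Module.Dual R (Matrix n n R) :=
  (LinearMap.mul R (Matrix n n R)).compr₂ (traceLinearMap n R R)

variable {n R}

@[simp]
theorem traceMulLeft_apply (X Y : Matrix n n R) : traceMulLeft n R X Y = (X * Y).trace := rfl

theorem traceMulLeft_surjective [DecidableEq n] : Function.Surjective (traceMulLeft n R) := by
  intro F
  refine ⟨of fun i j => F (single j i 1), LinearMap.ext fun Y => ?_⟩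
  conv_rhs => rw [matrix_eq_sum_single Y]
  simp only [traceMulLeft_apply, trace, diag, mul_apply, of_apply, map_sum]
  rw [Finset.sum_comm]
  refine Finset.sum_congr rfl fun i _ => Finset.sum_congr rfl fun j _ => ?_
  have hY : single i j (Y i j) = Y i j • single i j 1 := by rw [smul_single, smul_eq_mul, mul_one]
  rw [hY, map_smul, smul_eq_mul, mul_comm]

end TracePairing

variable {ι R : Type*} [Fintype ι] [CommRing R]

def IsAlt (A : Matrix ι ι R) : Prop := ∀ v, v ⬝ᵥ A *ᵥ v = 0

theorem isAlt_iff [DecidableEq ι] {A : Matrix ι ι R} :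
    A.IsAlt ↔ (∀ i, A i i = 0) ∧ ∀ i j, A i j + A j i = 0 := by
  have hsingle : ∀ i j, Pi.single i 1 ⬝ᵥ A *ᵥ Pi.single j 1 = A i j := by
    simp [single_dotProduct]
  constructor
  · intro hA
    have hdiag : ∀ i, A i i = 0 := fun i => hsingle i i ▸ hA (Pi.single i 1)
    refine ⟨hdiag, fun i j => ?_⟩
    have := hA (Pi.single i 1 + Pi.single j 1)
    simp only [mulVec_add, dotProduct_add, add_dotProduct, hsingle, hdiag] at this
    linear_combination this
  · rintro ⟨hdiag, hswap⟩ v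
    simp only [dotProduct, mulVec, Finset.mul_sum]
    refine Finset.sum_sum_eq_zero_of_add_swap_eq_zero (by simp [hdiag]) fun i j => ?_
    linear_combination v i * v j * hswap i j

theorem IsAlt.add_transpose_eq_zero [DecidableEq ι] {A : Matrix ι ι R} (hA : A.IsAlt) :
    A + Aᵀ = 0 := by
  ext i j
  exact (isAlt_iff.1 hA).2 i j

theorem isAlt_sub_transpose (B : Matrix ι ι R) : (B - Bᵀ).IsAlt := fun v => by
  rw [sub_mulVec, dotProduct_sub, dotProduct_transpose_mulVec, sub_self]

theorem IsAlt.exists_sub_transpose_eq [DecidableEq ι] {A : Matrix ι ι R} (hA : A.IsAlt) :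
    ∃ B : Matrix ι ι R, B - Bᵀ = A := by
  obtain ⟨hdiag, hswap⟩ := isAlt_iff.1 hA
  let e := Fintype.equivFin ι
  refine ⟨of fun i j => if e i < e j then A i j else 0, ?_⟩
  ext i j
  rcases lt_trichotomy (e i) (e j) with h | h | h
  · simp [h, h.not_gt]
  · obtain rfl := e.injective h
    simp [hdiag]
  · simp [h, h.not_gt]
    linear_combination -hswap j i

theorem trace_mul_eq_zero_of_isAlt [DecidableEq ι] {Y A : Matrix ι ι R} (hY : Yᵀ = Y)
    (hA : A.IsAlt) : (Y * A).trace = 0 := by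
  obtain ⟨hdiag, hswap⟩ := isAlt_iff.1 hA
  simp only [trace, diag, mul_apply]
  refine Finset.sum_sum_eq_zero_of_add_swap_eq_zero (by simp [hdiag]) fun i j => ?_
  have hYij : Y i j = Y j i := congrFun (congrFun hY j) i
  linear_combination Y i j * hswap j i - A i j * hYij

theorem forall_isAlt_trace_mul_eq_zero_iff [DecidableEq ι] {Y : Matrix ι ι R} :
    (∀ A : Matrix ι ι R, A.IsAlt → (Y * A).trace = 0) ↔ Yᵀ = Y := by
  refine ⟨fun h => ?_, fun hY A => trace_mul_eq_zero_of_isAlt hY⟩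
  ext i j
  have := h _ (isAlt_sub_transpose (single i j 1))
  simp only [mul_sub, trace_sub, transpose_single, trace_mul_single] at this
  simpa [sub_eq_zero] using this

-- `S * Xᵀ * S` is the `β`-adjoint of `X` when `S * S = 1`.
def addAdjoint (S : Matrix ι ι R) : Matrix ι ι R →ₗ[R] Matrix ι ι R :=
  LinearMap.id + (LinearMap.mulRight R S ∘ₗ LinearMap.mulLeft R S) ∘ₗ
    (transposeLinearEquiv ι ι R R).toLinearMap

@[simp]
theorem addAdjoint_apply (S X : Matrix ι ι R) : addAdjoint S X = X + S * Xᵀ * S := rfl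

theorem addAdjoint_eq_zero_iff [CharP R 2] {S Y : Matrix ι ι R} :
    addAdjoint S Y = 0 ↔ S * Yᵀ * S = Y := by
  rw [addAdjoint_apply, add_eq_zero_iff_eq_neg, neg_eq_self_of_charTwo, eq_comm]

theorem transpose_mul_add_transpose_mul_eq [DecidableEq ι] {B g : Matrix ι ι R}
    (hg : ∀ v, (g *ᵥ v) ⬝ᵥ B *ᵥ (g *ᵥ v) = v ⬝ᵥ B *ᵥ v) :
    gᵀ * (B + Bᵀ) * g = B + Bᵀ := by
  have hAlt : (gᵀ * B * g - B).IsAlt := fun v => by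
    rw [sub_mulVec, dotProduct_sub, ← mulVec_mulVec, ← mulVec_mulVec,
      dotProduct_transpose_mulVec, dotProduct_comm, hg, sub_self]
  have h := hAlt.add_transpose_eq_zero
  rw [transpose_sub, transpose_mul, transpose_mul, transpose_transpose] at h
  rw [Matrix.mul_add, Matrix.add_mul, ← sub_eq_zero, ← h]
  simp only [Matrix.mul_assoc]
  abel

theorem inv_eq_of_transpose_mul_mul_eq [DecidableEq ι] {S g : Matrix ι ι R} (hSS : S * S = 1)
    (h : gᵀ * S * g = S) : g⁻¹ = S * gᵀ * S :=
  inv_eq_left_inv (by rw [Matrix.mul_assoc, Matrix.mul_assoc, ← Matrix.mul_assoc gᵀ, h, hSS])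

section OrthogonalLieAlgebra

variable {k : Type*} [DecidableEq ι] [Field k]

theorem mem_oEven_iff_isAlt {S x : Matrix ι ι k} : x ∈ oEven S ↔ (Sᵀ * x).IsAlt := by
  refine forall_congr' fun v => ?_
  rw [← mulVec_mulVec, dotProduct_transpose_mulVec]

section SymmetricInvolution

variable {S : Matrix ι ι k} (hS : Sᵀ = S) (hSS : S * S = 1)
include hS hSS

theorem forall_mem_oEven_trace_mul_eq_zero_iff {Y : Matrix ι ι k} :
    (∀ x ∈ oEven S, (Y * x).trace = 0) ↔ S * Yᵀ * S = Y := by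
  have hmem : ∀ x, x ∈ oEven S ↔ (S * x).IsAlt := fun x => by rw [mem_oEven_iff_isAlt, hS]
  have hSSx : ∀ x, S * (S * x) = x := fun x => by rw [← Matrix.mul_assoc, hSS, Matrix.one_mul]
  calc (∀ x ∈ oEven S, (Y * x).trace = 0)
      ↔ ∀ A : Matrix ι ι k, A.IsAlt → (Y * S * A).trace = 0 := by
        refine ⟨fun h A hA => ?_, fun h x hx => ?_⟩
        · rw [Matrix.mul_assoc]
          exact h _ ((hmem _).2 (by rwa [hSSx]))
        · rw [← hSSx x, ← Matrix.mul_assoc]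
          exact h _ ((hmem x).1 hx)
    _ ↔ (Y * S)ᵀ = Y * S := forall_isAlt_trace_mul_eq_zero_iff
    _ ↔ S * Yᵀ * S = Y := by
        rw [transpose_mul, hS]
        constructor
        · intro h; rw [h, Matrix.mul_assoc, hSS, Matrix.mul_one]
        · intro h
          conv_rhs => rw [← h]
          rw [Matrix.mul_assoc, hSS, Matrix.mul_one]

theorem addAdjoint_conj {g : Matrix ι ι k} (h : gᵀ * S * g = S) (X : Matrix ι ι k) :
    addAdjoint S (g * X * g⁻¹) = g * addAdjoint S X * g⁻¹ := by
  have hSSx : ∀ A, S * (S * A) = A := fun A => by rw [← Matrix.mul_assoc, hSS, Matrix.one_mul]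
  rw [inv_eq_of_transpose_mul_mul_eq hSS h]
  simp only [addAdjoint_apply, transpose_mul, transpose_transpose, hS, Matrix.mul_add,
    Matrix.add_mul, Matrix.mul_assoc, hSSx]

variable [CharP k 2]

theorem addAdjoint_mem_oEven (X : Matrix ι ι k) : addAdjoint S X ∈ oEven S := by
  have hSX : S * addAdjoint S X = S * X - (S * X)ᵀ := by
    rw [addAdjoint_apply, transpose_mul, hS, sub_eq_add_neg, neg_eq_self_of_charTwo, mul_add,
      ← Matrix.mul_assoc, ← Matrix.mul_assoc, hSS, Matrix.one_mul]
  rw [mem_oEven_iff_isAlt, hS, hSX]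
  exact isAlt_sub_transpose _

theorem exists_addAdjoint_eq {x : Matrix ι ι k} (hx : x ∈ oEven S) :
    ∃ X, addAdjoint S X = x := by
  rw [mem_oEven_iff_isAlt, hS] at hx
  obtain ⟨B, hB⟩ := hx.exists_sub_transpose_eq
  refine ⟨S * B, ?_⟩
  calc addAdjoint S (S * B) = S * (B - Bᵀ) := by
        rw [addAdjoint_apply, transpose_mul, hS, sub_eq_add_neg, neg_eq_self_of_charTwo, mul_add]
        simp only [Matrix.mul_assoc, hSS, Matrix.mul_one]
    _ = x := by rw [hB, ← Matrix.mul_assoc, hSS, Matrix.one_mul]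

theorem forall_mem_oEven_trace_mul_eq_iff {X X' : Matrix ι ι k} :
    (∀ x ∈ oEven S, (X * x).trace = (X' * x).trace) ↔ addAdjoint S X = addAdjoint S X' := by
  rw [← sub_eq_zero, ← map_sub, addAdjoint_eq_zero_iff,
    ← forall_mem_oEven_trace_mul_eq_zero_iff hS hSS]
  simp only [sub_mul, trace_sub, sub_eq_zero]

theorem exists_dual_oEven_equiv :
    ∃ θ : Module.Dual k (oEven S) ≃ₗ[k] oEven S,
      ∀ X, (θ ((oEven S).dualRestrict (traceMulLeft ι k X)) : Matrix ι ι k) = addAdjoint S X := by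
  let φ := (oEven S).dualRestrict ∘ₗ traceMulLeft ι k
  let ψ := (addAdjoint S).codRestrict (oEven S) (addAdjoint_mem_oEven hS hSS)
  have hψ : Function.Surjective ψ := by
    rintro ⟨x, hx⟩
    obtain ⟨X, hX⟩ := exists_addAdjoint_eq hS hSS hx
    exact ⟨X, Subtype.ext hX⟩
  have hφ : Function.Surjective φ :=
    Subspace.dualRestrict_surjective.comp traceMulLeft_surjective
  have hker : LinearMap.ker φ = LinearMap.ker ψ := by
    ext X
    rw [LinearMap.mem_ker, LinearMap.mem_ker, ← Subtype.val_inj]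
    change _ ↔ addAdjoint S X = 0
    rw [addAdjoint_eq_zero_iff, ← forall_mem_oEven_trace_mul_eq_zero_iff hS hSS,
      LinearMap.ext_iff]
    simp [φ]
  obtain ⟨θ, hθ⟩ := LinearMap.exists_linearEquiv_apply_eq_of_ker_eq hφ hψ hker
  exact ⟨θ, fun X => congrArg Subtype.val (hθ X)⟩

theorem forall_mem_oEven_trace_mul_conj_eq_iff {g : Matrix ι ι k}
    (h : gᵀ * S * g = S) {X X' : Matrix ι ι k} :
    (∀ x ∈ oEven S, (X * (g⁻¹ * x * g)).trace = (X' * x).trace) ↔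
      g * addAdjoint S X * g⁻¹ = addAdjoint S X' := by
  have hcyc : ∀ x, (X * (g⁻¹ * x * g)).trace = (g * X * g⁻¹ * x).trace := fun x => by
    rw [Matrix.mul_assoc g, Matrix.mul_assoc g, trace_mul_comm g]
    simp only [Matrix.mul_assoc]
  simp only [hcyc]
  rw [forall_mem_oEven_trace_mul_eq_iff hS hSS, addAdjoint_conj hS hSS h]

end SymmetricInvolution

end OrthogonalLieAlgebra

end Matrix

/-- characteristic 2, `g = o(2n)`, `S = [[0,I],[I,0]]`,
`α(v) = vᵀBv` with `B = [[0,I],[0,0]]`, `O(2n) = {g : α(gv) = α(v)}`.  For `ξ ∈ g*`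
represented by `X` via the trace pairing, `T_ξ = X + SXᵀS` is well-defined, lies in
`o(2n)`, `θ : g* → g, ξ ↦ T_ξ` is a linear bijection, and `ξ, ζ` are in the same
`O(2n)`-orbit iff `T_ξ, T_ζ` are `O(2n)`-conjugate. -/
theorem even_orthogonal_dual_bijection
    {k : Type*} [Field k] [CharP k 2] (n : ℕ)
    (S B : Matrix (Fin n ⊕ Fin n) (Fin n ⊕ Fin n) k)
    (hS : S = Matrix.fromBlocks 0 1 1 0)
    (hB : B = Matrix.fromBlocks 0 1 0 0) :
    (∀ X X' : Matrix (Fin n ⊕ Fin n) (Fin n ⊕ Fin n) k,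
      (∀ x ∈ oEven S, (X * x).trace = (X' * x).trace) →
      X + S * Xᵀ * S = X' + S * X'ᵀ * S) ∧
    (∀ X : Matrix (Fin n ⊕ Fin n) (Fin n ⊕ Fin n) k, X + S * Xᵀ * S ∈ oEven S) ∧
    (∃ θ : Module.Dual k ↥(oEven S) ≃ₗ[k] ↥(oEven S),
      ∀ X : Matrix (Fin n ⊕ Fin n) (Fin n ⊕ Fin n) k,
        (θ ((Matrix.traceLinearMap (Fin n ⊕ Fin n) k k ∘ₗ
          LinearMap.mulLeft k X) ∘ₗ (oEven S).subtype) : Matrix (Fin n ⊕ Fin n) (Fin n ⊕ Fin n) k)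
          = X + S * Xᵀ * S) ∧
    (∀ Xξ Xζ : Matrix (Fin n ⊕ Fin n) (Fin n ⊕ Fin n) k,
      (∃ g : Matrix (Fin n ⊕ Fin n) (Fin n ⊕ Fin n) k,
        (∀ v, (g.mulVec v) ⬝ᵥ (B.mulVec (g.mulVec v)) = v ⬝ᵥ (B.mulVec v)) ∧
        ∀ x ∈ oEven S, (Xξ * (g⁻¹ * x * g)).trace = (Xζ * x).trace) ↔
      (∃ g : Matrix (Fin n ⊕ Fin n) (Fin n ⊕ Fin n) k,
        (∀ v, (g.mulVec v) ⬝ᵥ (B.mulVec (g.mulVec v)) = v ⬝ᵥ (B.mulVec v)) ∧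
        g * (Xξ + S * Xξᵀ * S) * g⁻¹ = Xζ + S * Xζᵀ * S)) := by
  have hST : Sᵀ = S := by rw [hS, fromBlocks_transpose]; simp
  have hSS : S * S = 1 := by rw [hS, fromBlocks_multiply, ← fromBlocks_one]; simp
  have hBS : B + Bᵀ = S := by rw [hB, hS, fromBlocks_transpose, fromBlocks_add]; simp
  refine ⟨fun X X' h => (forall_mem_oEven_trace_mul_eq_iff hST hSS).1 h,
    addAdjoint_mem_oEven hST hSS, exists_dual_oEven_equiv hST hSS, fun Xξ Xζ => ?_⟩
  refine exists_congr fun g => and_congr_right fun hg => ?_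
  exact forall_mem_oEven_trace_mul_conj_eq_iff hST hSS
    (hBS ▸ transpose_mul_add_transpose_mul_eq hg)
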